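/- Let X be a BK space containing the finitely supported sequences and A a matrix inducing a bounded operator L_A : X → ℓ_1. Then lim_m sup_{N ∈ F_m} ‖Σ_{n∈N} A_n‖*_X ≤ ‖L_A‖_χ ≤ 4 · lim_m sup_{N ∈ F_m} ‖Σ_{n∈N} A_n‖*_X, where F_m is the collection of nonempty finite subsets of ℕ with all elements greater than m. -/

import Mathlib

open scoped BigOperators ENNReal
open Filter Topology

noncomputable def fibr (n : ℕ) : ℝ := (Nat.fib (n + 1) : ℝ)

lemma fibr_pos (n : ℕ) : 0 < fibr n := by
  simpa [fibr] using Nat.cast_pos.mpr (Nat.fib_pos.mpr (Nat.succ_pos n))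

noncomputable def Fhat (x : ℕ → ℝ) : ℕ → ℝ
  | 0 => x 0
  | (n + 1) => fibr (n + 1) / fibr (n + 2) * x (n + 1) - fibr (n + 2) / fibr (n + 1) * x n

lemma Fhat_add (x y : ℕ → ℝ) : Fhat (x + y) = Fhat x + Fhat y := by
  funext n; cases n <;> simp [Fhat] <;> ring

lemma Fhat_smul (c : ℝ) (x : ℕ → ℝ) : Fhat (c • x) = c • Fhat x := by
  funext n; cases n <;> simp [Fhat] <;> ring

noncomputable def FhatL : (ℕ → ℝ) →ₗ[ℝ] (ℕ → ℝ) where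
  toFun := Fhat
  map_add' := Fhat_add
  map_smul' := Fhat_smul

lemma Fhat_inj : Function.Injective Fhat := by
  have h0 : ∀ x : ℕ → ℝ, Fhat x = 0 → x = 0 := by
    intro x hx
    funext n
    induction n with
    | zero => simpa [Fhat] using congrFun hx 0
    | succ n ih =>
        have h := congrFun hx (n + 1)
        simp only [Fhat, ih, Pi.zero_apply, mul_zero, sub_zero] at h
        have h1 : fibr (n + 1) / fibr (n + 2) ≠ 0 :=
          div_ne_zero (fibr_pos _).ne' (fibr_pos _).ne'
        simpa [Pi.zero_apply] using (mul_eq_zero.mp h).resolve_left h1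
  have : Function.Injective FhatL := (injective_iff_map_eq_zero' FhatL).mpr
    (fun x => ⟨fun h => h0 x h, fun h => by simp [FhatL, h]; funext n; cases n <;> simp [Fhat]⟩)
  exact this

noncomputable def FhatLP : PreLp (fun _ : ℕ => ℝ) →ₗ[ℝ] PreLp (fun _ : ℕ => ℝ) where
  toFun x := Fhat x
  map_add' x y := Fhat_add x y
  map_smul' c x := Fhat_smul c x

noncomputable def ellF (p : ℝ≥0∞) : Submodule ℝ (PreLp (fun _ : ℕ => ℝ)) :=
  (lpSubmodule ℝ (fun _ : ℕ => ℝ) p).comap FhatLP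

instance (p : ℝ≥0∞) : CoeOut (ellF p) (ℕ → ℝ) := ⟨fun x => (x : PreLp (fun _ : ℕ => ℝ))⟩

noncomputable def ellFtoLp (p : ℝ≥0∞) : ellF p →ₗ[ℝ] lp (fun _ : ℕ => ℝ) p where
  toFun x := ⟨Fhat (x : ℕ → ℝ), x.2⟩
  map_add' x y := Subtype.ext (Fhat_add (x : ℕ → ℝ) (y : ℕ → ℝ))
  map_smul' c x := Subtype.ext (Fhat_smul c (x : ℕ → ℝ))

lemma ellFtoLp_inj (p : ℝ≥0∞) : Function.Injective (ellFtoLp p) := by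
  intro x y h
  have h2 : Fhat (x : ℕ → ℝ) = Fhat (y : ℕ → ℝ) := congrArg Subtype.val h
  exact Subtype.ext (Fhat_inj h2)

noncomputable instance (p : ℝ≥0∞) [Fact (1 ≤ p)] : NormedAddCommGroup (ellF p) :=
  NormedAddCommGroup.induced _ _ (ellFtoLp p) (ellFtoLp_inj p)

noncomputable instance (p : ℝ≥0∞) [Fact (1 ≤ p)] : NormedSpace ℝ (ellF p) :=
  NormedSpace.induced _ _ _ (ellFtoLp p)

noncomputable def abar (a : ℕ → ℝ) (k : ℕ) : ℝ :=
  ∑' j : ℕ, (fibr (k + j + 1)) ^ 2 / (fibr k * fibr (k + 1)) * a (k + j)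

noncomputable def hmnc {X : Type*} [MetricSpace X] (Q : Set X) : ℝ :=
  sInf {ε : ℝ | 0 < ε ∧ ∃ s : Finset X, Q ⊆ ⋃ x ∈ s, Metric.ball x ε}

/-!
Write `T = L_A : X → ℓ¹` and `S_m = sup_{N ∈ F_m} ‖∑_{n ∈ N} T(·)_n‖`, which is antitone in `m`
with limit `l`. If `T(S_X)` is covered by finitely many `ε`-balls, the tails beyond `m` of their
finitely many centres are eventually `< δ` in `ℓ¹`, which gives `S_m ≤ ε + δ`; hence `l ≤ ‖L_A‖_χ`.
Conversely, splitting a block `N ⊆ (m, ∞)` by the sign of `(Tx)_n` shows that the `ℓ¹`-tail of `Tx`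
beyond `m` is at most `2 S_m`, while the truncations of `T(S_X)` to the first `m + 1` coordinates
form a bounded subset of a finite-dimensional space, hence are totally bounded; so
`‖L_A‖_χ ≤ 2 l ≤ 4 l`.
-/

open scoped lp

section LOne

variable {ι : Type*}

noncomputable def blockSum (N : Finset ι) : ℓ¹(ι, ℝ) →L[ℝ] ℝ :=
  ∑ n ∈ N, lp.evalCLM ℝ (fun _ : ι => ℝ) 1 n

@[simp]
lemma blockSum_apply (N : Finset ι) (f : ℓ¹(ι, ℝ)) : blockSum N f = ∑ n ∈ N, f n := by
  simp [blockSum, lp.evalCLM]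

lemma lp_one_hasSum_abs (f : ℓ¹(ι, ℝ)) : HasSum (fun n => |f n|) ‖f‖ := by
  simpa using lp.hasSum_norm (p := 1) (E := fun _ : ι => ℝ) (by simp) f

lemma sum_abs_le_lp_one_norm (f : ℓ¹(ι, ℝ)) (N : Finset ι) : ∑ n ∈ N, |f n| ≤ ‖f‖ :=
  sum_le_hasSum N (fun _ _ => abs_nonneg _) (lp_one_hasSum_abs f)

lemma lp_one_norm_le_of_forall_sum_abs_le (f : ℓ¹(ι, ℝ)) {c : ℝ}
    (h : ∀ N : Finset ι, ∑ n ∈ N, |f n| ≤ c) : ‖f‖ ≤ c :=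
  hasSum_le_of_sum_le (lp_one_hasSum_abs f) h

lemma abs_sum_le_lp_one_norm (f : ℓ¹(ι, ℝ)) (N : Finset ι) : |∑ n ∈ N, f n| ≤ ‖f‖ :=
  (Finset.abs_sum_le_sum_abs _ _).trans (sum_abs_le_lp_one_norm f N)

lemma eventually_sum_abs_lt (f : ℓ¹(ℕ, ℝ)) {δ : ℝ} (hδ : 0 < δ) :
    ∀ᶠ m in atTop, ∀ N : Finset ℕ, (∀ n ∈ N, m < n) → ∑ n ∈ N, |f n| < δ := by
  obtain ⟨s, hs⟩ := (lp_one_hasSum_abs f).summable.vanishing (Iio_mem_nhds hδ)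
  filter_upwards [eventually_ge_atTop (s.sup id)] with m hm N hN
  refine hs N (Finset.disjoint_left.mpr fun n hnN hns => ?_)
  have : n ≤ s.sup id := Finset.le_sup (f := id) hns
  have := hN n hnN
  omega

noncomputable def truncate (m : ℕ) (v : ℕ → ℝ) : ℓ¹(ℕ, ℝ) :=
  ∑ i ∈ Finset.range m, v i • lp.single 1 i (1 : ℝ)

lemma truncate_apply (m : ℕ) (v : ℕ → ℝ) (n : ℕ) :
    truncate m v n = if n < m then v n else 0 := by
  rw [truncate, lp.coeFn_sum, Finset.sum_apply]
  simp [lp.single_apply, Pi.single_apply]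

lemma continuous_truncate (m : ℕ) : Continuous (truncate m) :=
  continuous_finsetSum _ fun i _ => (continuous_apply i).smul continuous_const

end LOne

section Hmnc

variable {E : Type*} [MetricSpace E]

lemma hmnc_le {Q : Set E} {ε : ℝ} (hε : 0 < ε) (s : Finset E)
    (hQ : Q ⊆ ⋃ x ∈ s, Metric.ball x ε) : hmnc Q ≤ ε :=
  csInf_le ⟨0, fun _ h => h.1.le⟩ ⟨hε, s, hQ⟩

lemma le_hmnc {Q : Set E} (hQ : Bornology.IsBounded Q) {a : ℝ}
    (h : ∀ ε > 0, ∀ s : Finset E, Q ⊆ ⋃ x ∈ s, Metric.ball x ε → a ≤ ε) : a ≤ hmnc Q := by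
  refine le_csInf ?_ fun ε ⟨hε, s, hs⟩ => h ε hε s hs
  rcases Q.eq_empty_or_nonempty with rfl | ⟨q, hq⟩
  · exact ⟨1, one_pos, ∅, Set.empty_subset _⟩
  · obtain ⟨r, hr⟩ := hQ.subset_ball q
    exact ⟨r, Metric.pos_of_mem_ball (hr hq), {q}, by simpa using hr⟩

end Hmnc

lemma hmnc_le_of_norm_sub_truncate_le {Q : Set ℓ¹(ℕ, ℝ)} {R r : ℝ} (m : ℕ) (hr0 : 0 ≤ r)
    (hR : ∀ f ∈ Q, ‖f‖ ≤ R) (hr : ∀ f ∈ Q, ‖f - truncate m f‖ ≤ r) : hmnc Q ≤ r := by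
  refine le_of_forall_pos_le_add fun δ hδ => ?_
  have hK : IsCompact (truncate m '' Set.univ.pi fun _ => Set.Icc (-R) R) :=
    (isCompact_univ_pi fun _ => isCompact_Icc).image (continuous_truncate m)
  obtain ⟨t, -, ht, hcover⟩ := hK.finite_cover_balls hδ
  refine hmnc_le (by positivity) ht.toFinset fun f hf => ?_
  have hfK : truncate m f ∈ truncate m '' Set.univ.pi fun _ => Set.Icc (-R) R :=
    ⟨f, fun n _ => abs_le.mp ((lp.norm_apply_le_norm one_ne_zero f n).trans (hR f hf)), rfl⟩
  obtain ⟨y, hy, hfy⟩ := Set.mem_iUnion₂.mp (hcover hfK)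
  refine Set.mem_iUnion₂.mpr ⟨y, ht.mem_toFinset.mpr hy, ?_⟩
  rw [Metric.mem_ball] at hfy ⊢
  calc dist f y ≤ dist f (truncate m f) + dist (truncate m f) y := dist_triangle _ _ _
    _ < r + δ := by rw [dist_eq_norm]; linarith [hr f hf]

lemma sum_abs_le_two_mul_of_forall_subset {ι : Type*} (g : ι → ℝ) (N : Finset ι) {c : ℝ}
    (h : ∀ N' ⊆ N, |∑ n ∈ N', g n| ≤ c) : ∑ n ∈ N, |g n| ≤ 2 * c := by
  classical
  have hpos := h (N.filter fun n => 0 ≤ g n) (Finset.filter_subset _ _)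
  have hneg := h (N.filter fun n => ¬ 0 ≤ g n) (Finset.filter_subset _ _)
  rw [← Finset.sum_filter_add_sum_filter_not N (fun n => 0 ≤ g n),
    Finset.sum_congr rfl fun n hn => abs_of_nonneg (Finset.mem_filter.mp hn).2,
    Finset.sum_congr rfl fun n hn => abs_of_neg (not_le.mp (Finset.mem_filter.mp hn).2),
    Finset.sum_neg_distrib]
  linarith [le_abs_self (∑ n ∈ N.filter fun n => 0 ≤ g n, g n),
    neg_abs_le (∑ n ∈ N.filter fun n => ¬ 0 ≤ g n, g n)]

section Operator

variable {X : Type*} [NormedAddCommGroup X] [NormedSpace ℝ X] (T : X →L[ℝ] ℓ¹(ℕ, ℝ))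

/-- `‖∑_{n ∈ N} A_n‖*_X` for the matrix `A` of `T`, computed through `T`. -/
noncomputable def blockSup (N : Finset ℕ) : ℝ :=
  sSup {t : ℝ | ∃ x : X, ‖x‖ ≤ 1 ∧ t = |∑ n ∈ N, T x n|}

/-- `sup_{N ∈ F_m} ‖∑_{n ∈ N} A_n‖*_X`. -/
noncomputable def tailBlockSup (m : ℕ) : ℝ :=
  sSup {c : ℝ | ∃ N : Finset ℕ, N.Nonempty ∧ (∀ n ∈ N, m < n) ∧ c = blockSup T N}

lemma abs_sum_apply_le_opNorm {x : X} (hx : ‖x‖ ≤ 1) (N : Finset ℕ) :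
    |∑ n ∈ N, T x n| ≤ ‖T‖ :=
  (abs_sum_le_lp_one_norm (T x) N).trans (T.unit_le_opNorm x hx)

lemma abs_sum_apply_le_blockSup {x : X} (hx : ‖x‖ ≤ 1) (N : Finset ℕ) :
    |∑ n ∈ N, T x n| ≤ blockSup T N :=
  le_csSup ⟨‖T‖, by rintro _ ⟨y, hy, rfl⟩; exact abs_sum_apply_le_opNorm T hy N⟩ ⟨x, hx, rfl⟩

lemma blockSup_le {N : Finset ℕ} {c : ℝ} (h : ∀ x : X, ‖x‖ ≤ 1 → |∑ n ∈ N, T x n| ≤ c) :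
    blockSup T N ≤ c :=
  csSup_le ⟨_, 0, by simp, rfl⟩ fun _ ⟨x, hx, hc⟩ => hc ▸ h x hx

lemma blockSup_nonneg (N : Finset ℕ) : 0 ≤ blockSup T N := by
  simpa using abs_sum_apply_le_blockSup T (by simp : ‖(0 : X)‖ ≤ 1) N

lemma tailBlockSup_bddAbove (m : ℕ) :
    BddAbove {c : ℝ | ∃ N : Finset ℕ, N.Nonempty ∧ (∀ n ∈ N, m < n) ∧ c = blockSup T N} :=
  ⟨‖T‖, by rintro _ ⟨N, -, -, rfl⟩; exact blockSup_le T fun x hx => abs_sum_apply_le_opNorm T hx N⟩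

lemma blockSup_le_tailBlockSup {m : ℕ} {N : Finset ℕ} (hN : ∀ n ∈ N, m < n) :
    blockSup T N ≤ tailBlockSup T m := by
  rcases N.eq_empty_or_nonempty with rfl | hne
  · refine (blockSup_le T (c := 0) fun x _ => by simp).trans ?_
    exact (blockSup_nonneg T {m + 1}).trans
      (le_csSup (tailBlockSup_bddAbove T m) ⟨{m + 1}, by simp, by simp, rfl⟩)
  · exact le_csSup (tailBlockSup_bddAbove T m) ⟨N, hne, hN, rfl⟩

lemma abs_sum_apply_le_tailBlockSup {m : ℕ} {N : Finset ℕ} (hN : ∀ n ∈ N, m < n) {x : X}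
    (hx : ‖x‖ ≤ 1) : |∑ n ∈ N, T x n| ≤ tailBlockSup T m :=
  (abs_sum_apply_le_blockSup T hx N).trans (blockSup_le_tailBlockSup T hN)

lemma tailBlockSup_nonneg (m : ℕ) : 0 ≤ tailBlockSup T m := by
  simpa using abs_sum_apply_le_tailBlockSup T (N := ∅) (m := m) (by simp) (by simp : ‖(0 : X)‖ ≤ 1)

lemma tailBlockSup_le {m : ℕ} {c : ℝ}
    (h : ∀ N : Finset ℕ, (∀ n ∈ N, m < n) → ∀ x : X, ‖x‖ ≤ 1 → |∑ n ∈ N, T x n| ≤ c) :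
    tailBlockSup T m ≤ c :=
  csSup_le ⟨_, {m + 1}, by simp, by simp, rfl⟩ fun _ ⟨N, _, hN, hc⟩ =>
    hc ▸ blockSup_le T (h N hN)

lemma tailBlockSup_antitone : Antitone (tailBlockSup T) := fun _ _ hm =>
  tailBlockSup_le T fun _ hN _ hx =>
    abs_sum_apply_le_tailBlockSup T (fun n hn => hm.trans_lt (hN n hn)) hx

lemma tendsto_tailBlockSup :
    Tendsto (tailBlockSup T) atTop (𝓝 (⨅ m, tailBlockSup T m)) :=
  tendsto_atTop_ciInf (tailBlockSup_antitone T)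
    ⟨0, by rintro _ ⟨m, rfl⟩; exact tailBlockSup_nonneg T m⟩

lemma iInf_tailBlockSup_le (m : ℕ) : ⨅ m, tailBlockSup T m ≤ tailBlockSup T m :=
  ciInf_le ⟨0, by rintro _ ⟨m, rfl⟩; exact tailBlockSup_nonneg T m⟩ m

lemma norm_sub_truncate_le_two_mul_tailBlockSup {x : X} (hx : ‖x‖ ≤ 1) (m : ℕ) :
    ‖T x - truncate (m + 1) (T x)‖ ≤ 2 * tailBlockSup T m := by
  classical
  refine lp_one_norm_le_of_forall_sum_abs_le _ fun N => ?_
  have htail : ∑ n ∈ N, |(T x - truncate (m + 1) (T x)) n|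
      = ∑ n ∈ N.filter (m < ·), |T x n| := by
    rw [Finset.sum_filter]
    refine Finset.sum_congr rfl fun n _ => ?_
    rw [lp.coeFn_sub, Pi.sub_apply, truncate_apply]
    split_ifs <;> first | omega | simp
  rw [htail]
  exact sum_abs_le_two_mul_of_forall_subset _ _ fun N' hN' =>
    abs_sum_apply_le_tailBlockSup T (fun n hn => (Finset.mem_filter.mp (hN' hn)).2) hx

lemma iInf_tailBlockSup_le_hmnc :
    ⨅ m, tailBlockSup T m ≤ hmnc (T '' Metric.sphere 0 1) := by
  have hbdd : Bornology.IsBounded (T '' Metric.sphere 0 1) :=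
    T.lipschitz.isBounded_image Metric.isBounded_sphere
  refine le_hmnc hbdd fun ε hε s hs => le_of_forall_pos_le_add fun δ hδ => ?_
  obtain ⟨m, hm⟩ := ((Filter.eventually_all_finset s).mpr
    fun c _ => eventually_sum_abs_lt c hδ).exists
  refine (iInf_tailBlockSup_le T m).trans (tailBlockSup_le T fun N hN x hx => ?_)
  suffices ‖blockSum N ∘L T‖ ≤ ε + δ by
    simpa using ((blockSum N ∘L T).unit_le_opNorm x hx).trans this
  refine ContinuousLinearMap.opNorm_le_of_unit_norm (by positivity) fun y hy => ?_
  obtain ⟨c, hc, hyc⟩ := Set.mem_iUnion₂.mp (hs ⟨y, mem_sphere_zero_iff_norm.mpr hy, rfl⟩)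
  rw [Metric.mem_ball, dist_eq_norm] at hyc
  have hsplit : ∑ n ∈ N, T y n = ∑ n ∈ N, (T y - c) n + ∑ n ∈ N, c n := by
    rw [← Finset.sum_add_distrib]; simp
  calc ‖(blockSum N ∘L T) y‖ = |∑ n ∈ N, (T y - c) n + ∑ n ∈ N, c n| := by simp [hsplit]
    _ ≤ ‖T y - c‖ + ∑ n ∈ N, |c n| :=
      (abs_add_le _ _).trans (add_le_add (abs_sum_le_lp_one_norm _ N)
        (Finset.abs_sum_le_sum_abs _ _))
    _ ≤ ε + δ := add_le_add hyc.le (hm c hc N hN).le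

lemma hmnc_le_two_mul_iInf_tailBlockSup :
    hmnc (T '' Metric.sphere 0 1) ≤ 2 * ⨅ m, tailBlockSup T m := by
  refine le_of_forall_pos_le_add fun δ hδ => ?_
  obtain ⟨m, hm⟩ := ((tendsto_tailBlockSup T).eventually_lt_const
    (lt_add_of_pos_right _ (half_pos hδ))).exists
  refine (hmnc_le_of_norm_sub_truncate_le (R := ‖T‖) (m + 1)
    (mul_nonneg zero_le_two (tailBlockSup_nonneg T m)) ?_ ?_).trans (by linarith)
  · rintro _ ⟨x, hx, rfl⟩
    exact T.unit_le_opNorm x (mem_sphere_zero_iff_norm.mp hx).le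
  · rintro _ ⟨x, hx, rfl⟩
    exact norm_sub_truncate_le_two_mul_tailBlockSup T (mem_sphere_zero_iff_norm.mp hx).le m

end Operator

theorem stmt16_general {X : Type} [NormedAddCommGroup X] [NormedSpace ℝ X]
    (J : X →ₗ[ℝ] (ℕ → ℝ))
    (A : ℕ → ℕ → ℝ) (L : X →L[ℝ] lp (fun _ : ℕ => ℝ) 1)
    (hrows : ∀ n : ℕ, ∀ x : X, Summable fun k : ℕ => A n k * J x k)
    (hrep : ∀ x : X, ∀ n : ℕ, (L x : ℕ → ℝ) n = ∑' k : ℕ, A n k * J x k) :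
    ∃ l : ℝ,
      Tendsto (fun m : ℕ =>
          sSup {c : ℝ | ∃ N : Finset ℕ, N.Nonempty ∧ (∀ n ∈ N, m < n) ∧
            c = sSup {t : ℝ | ∃ x : X, ‖x‖ ≤ 1 ∧ t = |∑' k : ℕ, (∑ n ∈ N, A n k) * J x k|}})
        atTop (𝓝 l) ∧
      l ≤ hmnc (⇑L '' Metric.sphere 0 1) ∧ hmnc (⇑L '' Metric.sphere 0 1) ≤ 4 * l := by
  have hblock : ∀ (N : Finset ℕ) (x : X),
      ∑' k : ℕ, (∑ n ∈ N, A n k) * J x k = ∑ n ∈ N, L x n := fun N x => by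
    simp_rw [Finset.sum_mul, hrep]
    exact Summable.tsum_finsetSum fun n _ => hrows n x
  simp_rw [hblock]
  refine ⟨⨅ m, tailBlockSup L m, tendsto_tailBlockSup L, iInf_tailBlockSup_le_hmnc L,
    (hmnc_le_two_mul_iInf_tailBlockSup L).trans ?_⟩
  have := le_ciInf (tailBlockSup_nonneg L)
  linarith

theorem stmt16 {X : Type} [NormedAddCommGroup X] [NormedSpace ℝ X] [CompleteSpace X]
    (J : X →ₗ[ℝ] (ℕ → ℝ)) (hJinj : Function.Injective J)
    (hcoord : ∀ k : ℕ, Continuous fun x : X => J x k)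
    (hphi : ∀ s : ℕ →₀ ℝ, (s : ℕ → ℝ) ∈ Set.range J)
    (A : ℕ → ℕ → ℝ) (L : X →L[ℝ] lp (fun _ : ℕ => ℝ) 1)
    (hrows : ∀ n : ℕ, ∀ x : X, Summable fun k : ℕ => A n k * J x k)
    (hrep : ∀ x : X, ∀ n : ℕ, (L x : ℕ → ℝ) n = ∑' k : ℕ, A n k * J x k) :
    ∃ l : ℝ,
      Tendsto (fun m : ℕ =>
          sSup {c : ℝ | ∃ N : Finset ℕ, N.Nonempty ∧ (∀ n ∈ N, m < n) ∧
            c = sSup {t : ℝ | ∃ x : X, ‖x‖ ≤ 1 ∧ t = |∑' k : ℕ, (∑ n ∈ N, A n k) * J x k|}})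
        atTop (𝓝 l) ∧
      l ≤ hmnc (⇑L '' Metric.sphere 0 1) ∧ hmnc (⇑L '' Metric.sphere 0 1) ≤ 4 * l :=
  stmt16_general J A L hrows hrep
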